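/- arXiv:1610.05835 — 2 statements merged into one kernel-verified Lean document; each statement's English description precedes it below -/
import Mathlib

section
/- Let α > n, θ < 0, κ < 0, s₁ > 0, s₂ > 0, and let (u, v) be a pair of positive Lebesgue measurable solutions of the system u(y) = ∫_{ℝ^n_+} v^κ(x) |x−y|^{α−n} |x−x^o|^{−s₂} dx for y ∈ ∂ℝ^n_+ and v(x) = ∫_{∂ℝ^n_+} u^θ(y) |x−y|^{α−n} |y−x^o|^{−s₁} dy for x ∈ ℝ^n_+, satisfying that u(y)|y−x^o|^{−s₁′} ∈ L^{θ+1}(∂ℝ^n_+) and v(x)|x−x^o|^{−s₂′} ∈ L^{t′}(ℝ^n_+) for the associated exponents s₁′, s₂′, t′ arising from 0 < p < 2(n−1)/(n+α−2), 0 < t < 2n/(n+α) with θ = 1/(p−1), κ = t′−1, s₁ = n+α−2−(n−α)/(p−1), s₂ = (α−n)t′+2n. Then: (I) ∫_{∂ℝ^n_+} (1+|y|^{α−n}) u^θ(y) |y−x^o|^{−s₁} dy < ∞ and ∫_{ℝ^n_+} (1+|x|^{α−n}) v^κ(x) |x−x^o|^{−s₂} dx < ∞; (II) the limits a := lim_{|y|→∞}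 |y|^{n−α} u(y) = ∫_{ℝ^n_+} v^κ(x)|x−x^o|^{−s₂} dx and b := lim_{|x|→∞} |x|^{n−α} v(x) = ∫_{∂ℝ^n_+} u^θ(y)|y−x^o|^{−s₁} dy exist, are finite, and are positive; (III) there exist constants C₁, C₂ > 0 such that (1+|y|^{α−n})/C₁ ≤ u(y) ≤ C₁(1+|y|^{α−n}) for all y ∈ ∂ℝ^n_+ and (1+|x|^{α−n})/C₂ ≤ v(x) ≤ C₂(1+|x|^{α−n}) for all x ∈ ℝ^n_+. -/
noncomputable section

open MeasureTheory Metric ENNReal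

/-- `ℝ^n` with the Euclidean norm. -/
abbrev Eu (n : ℕ) : Type := EuclideanSpace ℝ (Fin n)

/-- The last coordinate `x_n` of a point `x ∈ ℝ^n`. -/
def lastCoord (n : ℕ) (x : Eu n) : ℝ :=
  if h : 0 < n then x ⟨n - 1, Nat.sub_lt h Nat.one_pos⟩ else 0

/-- The first coordinate `x_1` of a point `x ∈ ℝ^n`. -/
def firstCoord (n : ℕ) (x : Eu n) : ℝ :=
  if h : 0 < n then x ⟨0, h⟩ else 0

/-- The open upper half space `ℝ^n_+ = {x : x_n > 0}`. -/
def upperHalf (n : ℕ) : Set (Eu n) := {x | 0 < lastCoord n x}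

/-- The identification of `ℝ^{n-1}` with the boundary `∂ℝ^n_+ = {x : x_n = 0}`. -/
def emb (n : ℕ) (y : Eu (n - 1)) : Eu n :=
  (EuclideanSpace.equiv (Fin n) ℝ).symm fun i =>
    if h : (i : ℕ) < n - 1 then y ⟨i, h⟩ else 0

/-- The point `z^o = (0,…,0,-1) ∈ ℝ^n`. -/
def zo (n : ℕ) : Eu n :=
  (EuclideanSpace.equiv (Fin n) ℝ).symm fun i => if (i : ℕ) = n - 1 then -1 else 0

/-- The point `x^o = (0,…,0,-2) ∈ ℝ^n`. -/
def xo (n : ℕ) : Eu n :=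
  (EuclideanSpace.equiv (Fin n) ℝ).symm fun i => if (i : ℕ) = n - 1 then -2 else 0

/-- The surface measure on the sphere `∂B^n = {x : |x - z^o| = 1}`. -/
def surf (n : ℕ) : Measure (Eu n) :=
  Measure.map (fun p : sphere (0 : Eu n) 1 => zo n + (p : Eu n))
    (volume : Measure (Eu n)).toSphere

/-- Lebesgue measure restricted to the open unit ball `B^n` centered at `z^o`. -/
def ballM (n : ℕ) : Measure (Eu n) := (volume : Measure (Eu n)).restrict (ball (zo n) 1)

/-- `ω_n`, the volume of the unit ball in `ℝ^n`. -/
def unitBallVol (n : ℕ) : ℝ := ((volume : Measure (Eu n)) (ball (0 : Eu n) 1)).toReal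

/-- `(∫ F^r)^{1/r}` (in `ℝ≥0∞`) of a nonnegative function `F`, for an arbitrary
nonzero real exponent `r`. -/
def eLp {X : Type*} [MeasurableSpace X] (μ : Measure X) (f : X → ℝ) (r : ℝ) : ℝ≥0∞ :=
  (∫⁻ x, ENNReal.ofReal (f x) ^ r ∂μ) ^ (1 / r)

/-- `(∫ F^r)^{1/r}` (in `ℝ≥0∞`) of an `ℝ≥0∞`-valued function `F`. -/
def eLpE {X : Type*} [MeasurableSpace X] (μ : Measure X) (F : X → ℝ≥0∞) (r : ℝ) : ℝ≥0∞ :=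
  (∫⁻ x, F x ^ r ∂μ) ^ (1 / r)

/-- The real `L^r`-norm `(∫ |f|^r)^{1/r}`. -/
def rLp {X : Type*} [MeasurableSpace X] (μ : Measure X) (f : X → ℝ) (r : ℝ) : ℝ :=
  (∫ x, |f x| ^ r ∂μ) ^ (1 / r)

/-- The sharp constant `C_{e1}(n,α)`. -/
def Ce1 (n : ℕ) (α : ℝ) : ℝ :=
  ((n : ℝ) * unitBallVol n) ^ (-(((n : ℝ) + α - 2) / (2 * ((n : ℝ) - 1)))) *
    (∫ ξ in ball (zo n) 1,
        (∫ ζ, ‖ξ - ζ‖ ^ (α - (n : ℝ)) ∂surf n) ^ (2 * (n : ℝ) / ((n : ℝ) - α))) ^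
      (((n : ℝ) - α) / (2 * (n : ℝ)))

/-- The sharp constant `C_{e2}(n,α)`. -/
def Ce2 (n : ℕ) (α : ℝ) : ℝ :=
  ((n : ℝ) * unitBallVol n) ^ (-(((n : ℝ) + α - 4) / (2 * ((n : ℝ) - 1)))) *
    (∫ ξ in ball (zo n) 1,
        (∫ ζ, (1 - ‖ξ - zo n‖ ^ 2) * ‖ξ - ζ‖ ^ (-((n : ℝ) - α + 2)) ∂surf n) ^
          (2 * (n : ℝ) / ((n : ℝ) - α))) ^ (((n : ℝ) - α) / (2 * (n : ℝ)))

/-! With `β = α - n > 0`, both equations present a solution as a potential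
`z ↦ ∫ g(a) ‖a - z‖^β` of a positive density `g`, with a kernel that grows at infinity.
Such a potential is at least `c (1 + ‖z‖)^β`: take two balls of positive mass far apart, so
that every `z` is far from one of them. It is at most `(1 + ‖z‖)^β ∫ g(a) (1 + ‖a‖)^β`, and
when that integral is finite, dominated convergence gives `‖z‖^{-β} · potential → ∫ g`.

Because `θ, κ < 0`, the lower bound `u ≳ (1 + ‖y‖)^β` turns into
`u^θ(y) (1 + ‖y‖)^β ‖y - x^o‖^{-s₁} ≲ (1 + ‖y‖)^{-2(n-1)}`, which is integrable on `ℝ^{n-1}`,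
and likewise the lower bound for `v` gives the bound `(1 + ‖x‖)^{-2n}` on `ℝ^n_+`.
The potential bounds then yield all the claims. -/

open Filter Topology Module

lemma ofReal_mul_le_ofReal_mul {g k K : ℝ} (hk : 0 ≤ k) (hkK : k ≤ K) :
    ENNReal.ofReal (g * k) ≤ ENNReal.ofReal (g * K) := by
  rcases le_total 0 g with hg | hg
  · exact ENNReal.ofReal_le_ofReal (mul_le_mul_of_nonneg_left hkK hg)
  · rw [ENNReal.ofReal_of_nonpos (mul_nonpos_of_nonpos_of_nonneg hg hk)]
    exact bot_le

section WeightedIntegrals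

variable {X : Type*} [MeasurableSpace X] {μ : Measure X}

lemma lintegral_ofReal_mul_le {g k w : X → ℝ} {C : ℝ} (hC : 0 ≤ C)
    (hk : ∀ a, 0 ≤ k a ∧ k a ≤ C * w a) :
    ∫⁻ a, ENNReal.ofReal (g a * k a) ∂μ ≤
      ENNReal.ofReal C * ∫⁻ a, ENNReal.ofReal (g a * w a) ∂μ := by
  rw [← lintegral_const_mul' _ _ ENNReal.ofReal_ne_top]
  refine lintegral_mono fun a => ?_
  rw [← ENNReal.ofReal_mul hC, mul_left_comm]
  exact ofReal_mul_le_ofReal_mul (hk a).1 (hk a).2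

lemma lintegral_ofReal_mul_ne_top {g k w : X → ℝ} {C : ℝ} (hC : 0 ≤ C)
    (hk : ∀ a, 0 ≤ k a ∧ k a ≤ C * w a) (hw : ∫⁻ a, ENNReal.ofReal (g a * w a) ∂μ ≠ ⊤) :
    ∫⁻ a, ENNReal.ofReal (g a * k a) ∂μ ≠ ⊤ :=
  ne_top_of_le_ne_top (ENNReal.mul_ne_top ENNReal.ofReal_ne_top hw)
    (lintegral_ofReal_mul_le hC hk)

lemma setLIntegral_ofReal_pos {g : X → ℝ} {S : Set X} (hg : Measurable g)
    (hpos : ∀ a ∈ S, 0 < g a) (hS : 0 < μ S) : 0 < ∫⁻ a in S, ENNReal.ofReal (g a) ∂μ := by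
  rw [setLIntegral_pos_iff hg.ennreal_ofReal]
  refine hS.trans_le (measure_mono fun a ha => ⟨?_, ha⟩)
  exact (ENNReal.ofReal_pos.mpr (hpos a ha)).ne'

end WeightedIntegrals

lemma setLIntegral_ofReal_ne_top_of_le_one_add_norm_rpow {F : Type*} [NormedAddCommGroup F]
    [NormedSpace ℝ F] [FiniteDimensional ℝ F] [MeasurableSpace F] [BorelSpace F]
    {μ : Measure F} [μ.IsAddHaarMeasure] {s : Set F} (hs : MeasurableSet s) {h : F → ℝ}
    {C r : ℝ} (hr : (finrank ℝ F : ℝ) < r) (hh : ∀ x ∈ s, h x ≤ C * (1 + ‖x‖) ^ (-r)) :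
    ∫⁻ x in s, ENNReal.ofReal (h x) ∂μ ≠ ⊤ := by
  refine ne_top_of_le_ne_top ?_ ((setLIntegral_mono' hs fun x hx =>
    ENNReal.ofReal_le_ofReal (hh x hx)).trans (setLIntegral_le_lintegral s _))
  exact ((integrable_one_add_norm hr).const_mul C).lintegral_lt_top.ne

lemma one_add_rpow_le_two_mul_one_add_rpow {ρ β : ℝ} (hρ : 0 ≤ ρ) (hβ : 0 ≤ β) :
    1 + ρ ^ β ≤ 2 * (1 + ρ) ^ β := by
  have h1 : (1 : ℝ) ≤ (1 + ρ) ^ β := Real.one_le_rpow (by linarith) hβ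
  have h2 : ρ ^ β ≤ (1 + ρ) ^ β := Real.rpow_le_rpow hρ (by linarith) hβ
  linarith

lemma one_add_rpow_le_two_rpow_mul_one_add_rpow {ρ β : ℝ} (hρ : 0 ≤ ρ) (hβ : 0 ≤ β) :
    (1 + ρ) ^ β ≤ 2 ^ β * (1 + ρ ^ β) := by
  have h2 : (0 : ℝ) ≤ 2 ^ β := by positivity
  have hρβ : (0 : ℝ) ≤ ρ ^ β := by positivity
  rcases le_total ρ 1 with h | h
  · calc (1 + ρ) ^ β ≤ 2 ^ β := Real.rpow_le_rpow (by linarith) (by linarith) hβ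
      _ ≤ 2 ^ β * (1 + ρ ^ β) := le_mul_of_one_le_right h2 (by linarith)
  · calc (1 + ρ) ^ β ≤ (2 * ρ) ^ β := Real.rpow_le_rpow (by linarith) (by linarith) hβ
      _ = 2 ^ β * ρ ^ β := Real.mul_rpow (by norm_num) hρ
      _ ≤ 2 ^ β * (1 + ρ ^ β) := by gcongr; linarith

lemma one_add_rpow_div_le_and_le {ρ a c M β : ℝ} (hρ : 0 ≤ ρ) (hβ : 0 ≤ β) (hc : 0 < c)
    (hlow : c * (1 + ρ) ^ β ≤ a) (hup : a ≤ M * (1 + ρ) ^ β) :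
    (1 + ρ ^ β) / max (2 / c) (2 ^ β * M) ≤ a ∧ a ≤ max (2 / c) (2 ^ β * M) * (1 + ρ ^ β) := by
  have hpow : 0 < (1 + ρ) ^ β := by positivity
  have hcM : c ≤ M := le_of_mul_le_mul_right (hlow.trans hup) hpow
  have hC : 0 < max (2 / c) (2 ^ β * M) := lt_max_of_lt_left (by positivity)
  constructor
  · rw [div_le_iff₀ hC]
    calc 1 + ρ ^ β ≤ 2 / c * (c * (1 + ρ) ^ β) := by
          rw [← mul_assoc, div_mul_cancel₀ _ hc.ne']
          exact one_add_rpow_le_two_mul_one_add_rpow hρ hβ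
      _ ≤ a * max (2 / c) (2 ^ β * M) := by
          rw [mul_comm]
          exact mul_le_mul hlow (le_max_left _ _) (by positivity) ((mul_pos hc hpow).le.trans hlow)
  · calc a ≤ M * (2 ^ β * (1 + ρ ^ β)) :=
          hup.trans (mul_le_mul_of_nonneg_left (one_add_rpow_le_two_rpow_mul_one_add_rpow hρ hβ)
            (hc.le.trans hcM))
      _ = 2 ^ β * M * (1 + ρ ^ β) := by ring
      _ ≤ max (2 / c) (2 ^ β * M) * (1 + ρ ^ β) := by gcongr; exact le_max_right _ _

lemma rpow_mul_rpow_neg_mul_rpow_le {a c d ρ β θ σ : ℝ} (hc : 0 < c) (hρ : 0 ≤ ρ) (hθ : θ ≤ 0)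
    (hσ : 0 ≤ σ) (ha : c * (1 + ρ) ^ β ≤ a) (hd : (1 + ρ) / 4 ≤ d) :
    a ^ θ * d ^ (-σ) * (1 + ρ) ^ β ≤ c ^ θ * 4 ^ σ * (1 + ρ) ^ (β * θ - σ + β) := by
  have hρ1 : 0 < 1 + ρ := by linarith
  have haθ : a ^ θ ≤ c ^ θ * (1 + ρ) ^ (β * θ) := by
    rw [Real.rpow_mul hρ1.le, ← Real.mul_rpow hc.le (by positivity)]
    exact Real.rpow_le_rpow_of_nonpos (by positivity) ha hθ
  have hdσ : d ^ (-σ) ≤ 4 ^ σ * (1 + ρ) ^ (-σ) := by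
    calc d ^ (-σ) ≤ ((1 + ρ) / 4) ^ (-σ) :=
          Real.rpow_le_rpow_of_nonpos (by positivity) hd (by linarith)
      _ = 4 ^ σ * (1 + ρ) ^ (-σ) := by
          rw [Real.div_rpow hρ1.le (by norm_num), Real.rpow_neg (by norm_num : (0 : ℝ) ≤ 4),
            div_inv_eq_mul, mul_comm]
  calc a ^ θ * d ^ (-σ) * (1 + ρ) ^ β
      ≤ c ^ θ * (1 + ρ) ^ (β * θ) * (4 ^ σ * (1 + ρ) ^ (-σ)) * (1 + ρ) ^ β := by
        have hd0 : 0 < d := (by positivity : (0 : ℝ) < (1 + ρ) / 4).trans_le hd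
        gcongr
      _ = c ^ θ * 4 ^ σ * (1 + ρ) ^ (β * θ - σ + β) := by
        rw [Real.rpow_add hρ1, sub_eq_add_neg, Real.rpow_add hρ1]; ring

section Potential

variable {X E : Type*} [MeasurableSpace X] [NormedAddCommGroup E]

def potential (μ : Measure X) (P : X → E) (g : X → ℝ) (β : ℝ) (z : E) : ℝ≥0∞ :=
  ∫⁻ a, ENNReal.ofReal (g a * ‖P a - z‖ ^ β) ∂μ

variable {μ : Measure X} {P : X → E} {g : X → ℝ} {β : ℝ}

lemma lintegral_ofReal_ne_top_of_mul_one_add_rpow (hβ : 0 ≤ β)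
    (hfin : ∫⁻ a, ENNReal.ofReal (g a * (1 + ‖P a‖) ^ β) ∂μ ≠ ⊤) :
    ∫⁻ a, ENNReal.ofReal (g a) ∂μ ≠ ⊤ := by
  simpa using lintegral_ofReal_mul_ne_top (k := fun _ => 1) zero_le_one
    (fun a => ⟨zero_le_one, by simpa using Real.one_le_rpow (by simp) hβ⟩) hfin

lemma lintegral_one_add_rpow_mul_ne_top (hβ : 0 ≤ β)
    (hfin : ∫⁻ a, ENNReal.ofReal (g a * (1 + ‖P a‖) ^ β) ∂μ ≠ ⊤) :
    ∫⁻ a, ENNReal.ofReal ((1 + ‖P a‖ ^ β) * g a) ∂μ ≠ ⊤ := by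
  refine (lintegral_congr fun a => by rw [mul_comm]).trans_ne ?_
  exact lintegral_ofReal_mul_ne_top zero_le_two (fun a => ⟨by positivity,
    one_add_rpow_le_two_mul_one_add_rpow (norm_nonneg _) hβ⟩) hfin

lemma norm_sub_le_one_add_mul_one_add (w z : E) : ‖w - z‖ ≤ (1 + ‖w‖) * (1 + ‖z‖) := by
  nlinarith [norm_sub_le w z, norm_nonneg w, norm_nonneg z]

lemma potential_le (hβ : 0 ≤ β) (z : E) :
    potential μ P g β z ≤
      ENNReal.ofReal ((1 + ‖z‖) ^ β) * ∫⁻ a, ENNReal.ofReal (g a * (1 + ‖P a‖) ^ β) ∂μ :=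
  lintegral_ofReal_mul_le (by positivity) fun a => ⟨by positivity, by
    rw [mul_comm, ← Real.mul_rpow (by positivity) (by positivity)]
    exact Real.rpow_le_rpow (norm_nonneg _) (norm_sub_le_one_add_mul_one_add _ _) hβ⟩

lemma toReal_potential_le (hβ : 0 ≤ β)
    (hfin : ∫⁻ a, ENNReal.ofReal (g a * (1 + ‖P a‖) ^ β) ∂μ ≠ ⊤) (z : E) :
    (potential μ P g β z).toReal ≤
      (∫⁻ a, ENNReal.ofReal (g a * (1 + ‖P a‖) ^ β) ∂μ).toReal * (1 + ‖z‖) ^ β := by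
  refine (ENNReal.toReal_mono (ENNReal.mul_ne_top ENNReal.ofReal_ne_top hfin)
    (potential_le hβ z)).trans_eq ?_
  rw [ENNReal.toReal_mul, ENNReal.toReal_ofReal (by positivity), mul_comm]

lemma exists_bounds_toReal_potential (hβ : 0 ≤ β) {c : ℝ} (hc : 0 < c)
    (hlow : ∀ z, ENNReal.ofReal (c * (1 + ‖z‖) ^ β) ≤ potential μ P g β z)
    (hfin : ∫⁻ a, ENNReal.ofReal (g a * (1 + ‖P a‖) ^ β) ∂μ ≠ ⊤) :
    ∃ C > 0, ∀ z, (1 + ‖z‖ ^ β) / C ≤ (potential μ P g β z).toReal ∧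
      (potential μ P g β z).toReal ≤ C * (1 + ‖z‖ ^ β) := by
  refine ⟨_, lt_max_of_lt_left (by positivity), fun z => one_add_rpow_div_le_and_le
    (norm_nonneg z) hβ hc ?_ (toReal_potential_le hβ hfin z)⟩
  refine (ENNReal.ofReal_le_iff_le_toReal (ne_top_of_le_ne_top ?_ (potential_le hβ z))).mp (hlow z)
  exact ENNReal.mul_ne_top ENNReal.ofReal_ne_top hfin

lemma ofReal_rpow_mul_setLIntegral_le_potential {S : Set X} (hS : MeasurableSet S)
    (hβ : 0 ≤ β) {c : ℝ} (hc : 0 ≤ c) {z : E} (h : ∀ a ∈ S, c ≤ ‖P a - z‖) :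
    ENNReal.ofReal (c ^ β) * ∫⁻ a in S, ENNReal.ofReal (g a) ∂μ ≤ potential μ P g β z := by
  rw [← lintegral_const_mul' _ _ ENNReal.ofReal_ne_top]
  refine (setLIntegral_mono' hS fun a ha => ?_).trans (setLIntegral_le_lintegral S _)
  rw [← ENNReal.ofReal_mul (by positivity), mul_comm]
  exact ofReal_mul_le_ofReal_mul (by positivity) (Real.rpow_le_rpow hc (h a ha) hβ)

lemma one_add_norm_le_mul_norm_sub {c w z : E} {r : ℝ} (hr : 0 < r) (hw : ‖w - c‖ ≤ r)
    (hz : 2 * r ≤ ‖z - c‖) : 1 + ‖z‖ ≤ (2 + (1 + ‖c‖) / r) * ‖w - z‖ := by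
  have hwz : ‖z - c‖ - r ≤ ‖w - z‖ := by
    linarith [norm_sub_le_norm_sub_add_norm_sub z w c, norm_sub_rev z w]
  have hc : 1 + ‖c‖ ≤ (1 + ‖c‖) / r * ‖w - z‖ := by
    rw [div_mul_eq_mul_div, le_div_iff₀ hr]
    exact mul_le_mul_of_nonneg_left (by linarith) (by positivity)
  linarith [norm_le_norm_sub_add z c]

lemma exists_lower_bound_potential_away_from_ball {S : Set X} (hS : MeasurableSet S)
    (hβ : 0 ≤ β) {c : E} {r : ℝ} (hr : 0 < r) (hSc : ∀ a ∈ S, ‖P a - c‖ ≤ r)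
    (hmass : 0 < ∫⁻ a in S, ENNReal.ofReal (g a) ∂μ) :
    ∃ C > 0, ∀ z, 2 * r ≤ ‖z - c‖ →
      ENNReal.ofReal (C * (1 + ‖z‖) ^ β) ≤ potential μ P g β z := by
  obtain ⟨ε, -, hε0, hε⟩ := ENNReal.lt_iff_exists_real_btwn.mp hmass
  have hε : 0 < ε := ENNReal.ofReal_pos.mp hε0
  have hK : 0 < 2 + (1 + ‖c‖) / r := by positivity
  refine ⟨ε / (2 + (1 + ‖c‖) / r) ^ β, by positivity, fun z hz => ?_⟩
  calc ENNReal.ofReal (ε / (2 + (1 + ‖c‖) / r) ^ β * (1 + ‖z‖) ^ β)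
      = ENNReal.ofReal (((1 + ‖z‖) / (2 + (1 + ‖c‖) / r)) ^ β) * ENNReal.ofReal ε := by
        rw [← ENNReal.ofReal_mul (by positivity), Real.div_rpow (by positivity) hK.le]
        ring_nf
    _ ≤ ENNReal.ofReal (((1 + ‖z‖) / (2 + (1 + ‖c‖) / r)) ^ β) *
          ∫⁻ a in S, ENNReal.ofReal (g a) ∂μ := by gcongr
    _ ≤ potential μ P g β z :=
        ofReal_rpow_mul_setLIntegral_le_potential hS hβ (by positivity) fun a ha => by
          rw [div_le_iff₀ hK, mul_comm]
          exact one_add_norm_le_mul_norm_sub hr (hSc a ha) hz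

lemma exists_lower_bound_potential {S₁ S₂ : Set X} (hS₁ : MeasurableSet S₁)
    (hS₂ : MeasurableSet S₂) (hβ : 0 ≤ β) {c₁ c₂ : E} {r : ℝ} (hr : 0 < r)
    (hc : 4 * r ≤ ‖c₁ - c₂‖) (hS₁c : ∀ a ∈ S₁, ‖P a - c₁‖ ≤ r)
    (hS₂c : ∀ a ∈ S₂, ‖P a - c₂‖ ≤ r) (h₁ : 0 < ∫⁻ a in S₁, ENNReal.ofReal (g a) ∂μ)
    (h₂ : 0 < ∫⁻ a in S₂, ENNReal.ofReal (g a) ∂μ) :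
    ∃ C > 0, ∀ z, ENNReal.ofReal (C * (1 + ‖z‖) ^ β) ≤ potential μ P g β z := by
  obtain ⟨C₁, hC₁, hz₁⟩ := exists_lower_bound_potential_away_from_ball hS₁ hβ hr hS₁c h₁
  obtain ⟨C₂, hC₂, hz₂⟩ := exists_lower_bound_potential_away_from_ball hS₂ hβ hr hS₂c h₂
  refine ⟨min C₁ C₂, lt_min hC₁ hC₂, fun z => ?_⟩
  have hmin : ∀ C, min C₁ C₂ ≤ C → ENNReal.ofReal (min C₁ C₂ * (1 + ‖z‖) ^ β) ≤
      ENNReal.ofReal (C * (1 + ‖z‖) ^ β) := fun C hC =>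
    ENNReal.ofReal_le_ofReal (mul_le_mul_of_nonneg_right hC (by positivity))
  by_cases hz : 2 * r ≤ ‖z - c₁‖
  · exact (hmin C₁ (min_le_left _ _)).trans (hz₁ z hz)
  · refine (hmin C₂ (min_le_right _ _)).trans (hz₂ z ?_)
    linarith [norm_sub_le_norm_sub_add_norm_sub c₁ z c₂, norm_sub_rev c₁ z]

lemma tendsto_norm_sub_div_norm (w : E) :
    Tendsto (fun z : E => ‖w - z‖ / ‖z‖) (comap norm atTop) (𝓝 1) := by
  have hinv : Tendsto (fun z : E => ‖w‖ / ‖z‖) (comap norm atTop) (𝓝 0) := by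
    simpa only [div_eq_mul_inv, mul_zero, Function.comp_def] using
      (tendsto_inv_atTop_zero.comp (tendsto_comap (f := norm))).const_mul ‖w‖
  have hpos : ∀ᶠ z : E in comap norm atTop, 0 < ‖z‖ := tendsto_comap.eventually_gt_atTop 0
  refine tendsto_of_tendsto_of_tendsto_of_le_of_le' (by simpa using tendsto_const_nhds.sub hinv)
    (by simpa using tendsto_const_nhds.add hinv) ?_ ?_
  · filter_upwards [hpos] with z hz
    rw [← div_self hz.ne', ← sub_div]
    gcongr
    linarith [norm_sub_norm_le z w, norm_sub_rev z w]
  · filter_upwards [hpos] with z hz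
    rw [← div_self hz.ne', ← add_div]
    gcongr
    linarith [norm_sub_le w z]

lemma tendsto_rpow_neg_mul_toReal_potential [MeasurableSpace E] [BorelSpace E] {ι : Type*}
    {l : Filter ι} {Z : ι → E} (hβ : 0 ≤ β) (hP : Measurable P) (hg : Measurable g)
    (hfin : ∫⁻ a, ENNReal.ofReal (g a * (1 + ‖P a‖) ^ β) ∂μ ≠ ⊤)
    (hZ : Tendsto (fun i => ‖Z i‖) l atTop) :
    Tendsto (fun i => ‖Z i‖ ^ (-β) * (potential μ P g β (Z i)).toReal) l
      (𝓝 (∫⁻ a, ENNReal.ofReal (g a) ∂μ).toReal) := by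
  suffices Tendsto (fun z => ‖z‖ ^ (-β) * (potential μ P g β z).toReal) (comap norm atTop)
      (𝓝 (∫⁻ a, ENNReal.ofReal (g a) ∂μ).toReal) from this.comp (tendsto_comap_iff.mpr hZ)
  have hrescale : ∀ z, ‖z‖ ^ (-β) * (potential μ P g β z).toReal =
      (∫⁻ a, ENNReal.ofReal (g a * (‖P a - z‖ / ‖z‖) ^ β) ∂μ).toReal := fun z => by
    rw [potential, ← ENNReal.toReal_ofReal (Real.rpow_nonneg (norm_nonneg z) (-β)),
      ← ENNReal.toReal_mul, ← lintegral_const_mul' _ _ ENNReal.ofReal_ne_top]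
    congr 1
    refine lintegral_congr fun a => ?_
    rw [← ENNReal.ofReal_mul (by positivity), Real.div_rpow (norm_nonneg _) (norm_nonneg _),
      Real.rpow_neg (norm_nonneg _)]
    ring_nf
  simp_rw [hrescale]
  refine (ENNReal.tendsto_toReal (lintegral_ofReal_ne_top_of_mul_one_add_rpow hβ hfin)).comp
    (tendsto_lintegral_filter_of_dominated_convergence
      (fun a => ENNReal.ofReal (g a * (2 ^ β * (1 + ‖P a‖) ^ β))) ?_ ?_ ?_ ?_)
  · exact Eventually.of_forall fun z =>
      (hg.mul (((hP.sub_const z).norm.div_const _).pow_const β)).ennreal_ofReal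
  · filter_upwards [tendsto_comap.eventually_ge_atTop 1] with z hz
    refine ae_of_all _ fun a => ofReal_mul_le_ofReal_mul (by positivity) ?_
    rw [← Real.mul_rpow (by norm_num) (by positivity)]
    refine Real.rpow_le_rpow (by positivity) ?_ hβ
    rw [div_le_iff₀ (by linarith)]
    nlinarith [norm_sub_le (P a) z, norm_nonneg (P a)]
  · exact lintegral_ofReal_mul_ne_top (by positivity) (fun a => ⟨by positivity, le_rfl⟩) hfin
  · exact ae_of_all _ fun a => by
      simpa using ENNReal.tendsto_ofReal
        (((tendsto_norm_sub_div_norm (P a)).rpow_const (Or.inr hβ)).const_mul (g a))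

end Potential

section HalfSpace

variable {m : ℕ}

lemma lastCoord_succ (x : Eu (m + 1)) : lastCoord (m + 1) x = x (Fin.last m) := by
  simp [lastCoord, Fin.last]

lemma xo_succ : xo (m + 1) = EuclideanSpace.single (Fin.last m) (-2) := by
  ext i
  simp [xo, PiLp.single_apply, Fin.ext_iff]

lemma abs_lastCoord_sub_le (x : Eu (m + 1)) (t : ℝ) :
    |lastCoord (m + 1) x - t| ≤ ‖x - EuclideanSpace.single (Fin.last m) t‖ := by
  simpa [lastCoord_succ] using
    PiLp.norm_apply_le (x - EuclideanSpace.single (Fin.last m) t) (Fin.last m)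

lemma one_add_norm_div_four_le_norm_sub_xo {z : Eu (m + 1)} (hz : 0 ≤ lastCoord (m + 1) z) :
    (1 + ‖z‖) / 4 ≤ ‖z - xo (m + 1)‖ := by
  have hlast : lastCoord (m + 1) z + 2 ≤ ‖z - xo (m + 1)‖ := by
    have := abs_lastCoord_sub_le z (-2)
    rw [← xo_succ] at this
    linarith [le_abs_self (lastCoord (m + 1) z - -2)]
  have hxo : ‖xo (m + 1)‖ = 2 := by simp [xo_succ]
  have := norm_sub_norm_le z (xo (m + 1))
  rcases le_total ‖z‖ 7 with h | h <;> linarith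

lemma ball_single_last_subset_upperHalf {t r : ℝ} (h : r ≤ t) :
    ball (EuclideanSpace.single (Fin.last m) t) r ⊆ upperHalf (m + 1) := fun x hx => by
  rw [mem_ball, dist_eq_norm] at hx
  show 0 < lastCoord (m + 1) x
  linarith [neg_abs_le (lastCoord (m + 1) x - t), abs_lastCoord_sub_le x t]

lemma measurableSet_upperHalf : MeasurableSet (upperHalf (m + 1)) := by
  have : lastCoord (m + 1) = fun x => x (Fin.last m) := funext lastCoord_succ
  exact measurableSet_lt measurable_const (by rw [this]; fun_prop)

lemma emb_succ_apply (y : Eu m) (i : Fin (m + 1)) :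
    emb (m + 1) y i = if h : (i : ℕ) < m then y ⟨i, h⟩ else 0 := rfl

lemma lastCoord_emb (y : Eu m) : lastCoord (m + 1) (emb (m + 1) y) = 0 := by
  simp [lastCoord_succ, emb_succ_apply]

lemma emb_sub (y y' : Eu m) : emb (m + 1) (y - y') = emb (m + 1) y - emb (m + 1) y' := by
  ext i
  simp only [emb_succ_apply, PiLp.sub_apply]
  split_ifs <;> simp

lemma norm_emb (y : Eu m) : ‖emb (m + 1) y‖ = ‖y‖ := by
  rw [EuclideanSpace.norm_eq, EuclideanSpace.norm_eq, Fin.sum_univ_castSucc]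
  simp [emb_succ_apply]

lemma isometry_emb : Isometry (emb (m + 1)) :=
  Isometry.of_dist_eq fun y y' => by rw [dist_eq_norm, dist_eq_norm, ← emb_sub, norm_emb]

@[fun_prop]
lemma continuous_emb : Continuous (emb (m + 1)) :=
  isometry_emb.continuous

lemma rpow_mul_norm_sub_xo_rpow_pos {a θ σ : ℝ} {z : Eu (m + 1)} (ha : 0 < a)
    (hz : 0 ≤ lastCoord (m + 1) z) : 0 < a ^ θ * ‖z - xo (m + 1)‖ ^ (-σ) :=
  mul_pos (Real.rpow_pos_of_pos ha θ) (Real.rpow_pos_of_pos ((by positivity : (0 : ℝ) <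
    (1 + ‖z‖) / 4).trans_le (one_add_norm_div_four_le_norm_sub_xo hz)) _)

lemma exists_lower_bound_potential_upperHalf {g : Eu (m + 1) → ℝ} {β : ℝ} (hβ : 0 ≤ β)
    (hg : Measurable g) (hpos : ∀ x ∈ upperHalf (m + 1), 0 < g x) :
    ∃ C > 0, ∀ z, ENNReal.ofReal (C * (1 + ‖z‖) ^ β) ≤
      potential (volume.restrict (upperHalf (m + 1))) id g β z := by
  have hmass : ∀ t : ℝ, 1 ≤ t → 0 < ∫⁻ x in ball (EuclideanSpace.single (Fin.last m) t) 1,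
      ENNReal.ofReal (g x) ∂volume.restrict (upperHalf (m + 1)) := fun t ht => by
    have hsub := ball_single_last_subset_upperHalf (m := m) ht
    refine setLIntegral_ofReal_pos hg (fun x hx => hpos x (hsub hx)) ?_
    rw [Measure.restrict_apply measurableSet_ball, Set.inter_eq_left.mpr hsub]
    exact measure_ball_pos _ _ one_pos
  refine exists_lower_bound_potential measurableSet_ball measurableSet_ball hβ one_pos ?_
    (fun x hx => (mem_ball_iff_norm.mp hx).le) (fun x hx => (mem_ball_iff_norm.mp hx).le)
    (hmass 1 le_rfl) (hmass 5 (by norm_num))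
  rw [← PiLp.single_sub, PiLp.norm_single]
  norm_num

lemma exists_lower_bound_potential_emb (hm : 0 < m) {f : Eu m → ℝ} {β : ℝ} (hβ : 0 ≤ β)
    (hf : Measurable f) (hpos : ∀ y, 0 < f y) :
    ∃ C > 0, ∀ z, ENNReal.ofReal (C * (1 + ‖z‖) ^ β) ≤ potential volume (emb (m + 1)) f β z := by
  have hnear : ∀ c, ∀ y ∈ ball c 1, ‖emb (m + 1) y - emb (m + 1) c‖ ≤ 1 := fun c y hy => by
    rw [← emb_sub, norm_emb]
    exact (mem_ball_iff_norm.mp hy).le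
  have hmass : ∀ c, 0 < ∫⁻ y in ball c 1, ENNReal.ofReal (f y) := fun c =>
    setLIntegral_ofReal_pos hf (fun y _ => hpos y) (measure_ball_pos _ _ one_pos)
  refine exists_lower_bound_potential measurableSet_ball measurableSet_ball hβ one_pos ?_
    (hnear 0) (hnear (EuclideanSpace.single ⟨0, hm⟩ 4)) (hmass _) (hmass _)
  rw [← emb_sub, norm_emb, zero_sub, norm_neg, PiLp.norm_single]
  norm_num

lemma setLIntegral_rpow_mul_norm_sub_xo_ne_top {F : Type*} [NormedAddCommGroup F]
    [NormedSpace ℝ F] [FiniteDimensional ℝ F] [MeasurableSpace F] [BorelSpace F]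
    {μ : Measure F} [μ.IsAddHaarMeasure] {s : Set F} (hs : MeasurableSet s) {Q : F → Eu (m + 1)}
    (hQ : ∀ y ∈ s, ‖Q y‖ = ‖y‖ ∧ 0 ≤ lastCoord (m + 1) (Q y)) {h : F → ℝ} {c β θ σ : ℝ}
    (hc : 0 < c) (hθ : θ ≤ 0) (hσ : 0 ≤ σ) (hh : ∀ y ∈ s, c * (1 + ‖y‖) ^ β ≤ h y)
    (hexp : (finrank ℝ F : ℝ) < -(β * θ - σ + β)) :
    ∫⁻ y in s, ENNReal.ofReal (h y ^ θ * ‖Q y - xo (m + 1)‖ ^ (-σ) * (1 + ‖Q y‖) ^ β) ∂μ ≠ ⊤ :=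
  setLIntegral_ofReal_ne_top_of_le_one_add_norm_rpow hs hexp fun y hy => by
    have hd := one_add_norm_div_four_le_norm_sub_xo (hQ y hy).2
    rw [(hQ y hy).1] at hd ⊢
    rw [neg_neg]
    exact rpow_mul_rpow_neg_mul_rpow_le hc (norm_nonneg y) hθ hσ (hh y hy) hd

end HalfSpace

lemma exponents_of_p_lt {N α p θ s₁ : ℝ} (hN : 1 ≤ N) (hα : N < α)
    (hp : p < 2 * (N - 1) / (N + α - 2)) (hθ : θ = 1 / (p - 1))
    (hs₁ : s₁ = N + α - 2 - (N - α) / (p - 1)) :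
    θ ≤ 0 ∧ 0 ≤ s₁ ∧ (α - N) * θ - s₁ + (α - N) = -(2 * (N - 1)) := by
  have hp' := (lt_div_iff₀ (by linarith : 0 < N + α - 2)).mp hp
  have hp1 : p - 1 < 0 := by nlinarith
  refine ⟨hθ ▸ (one_div_neg.mpr hp1).le, ?_, by rw [hθ, hs₁]; ring⟩
  rw [hs₁, sub_nonneg, div_le_iff_of_neg hp1]
  nlinarith

lemma exponents_of_t_lt {N α t t' κ s₂ : ℝ} (hN : 0 < N) (hα : N < α)
    (ht : t < 2 * N / (N + α)) (ht' : t' = t / (t - 1)) (hκ : κ = t' - 1)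
    (hs₂ : s₂ = (α - N) * t' + 2 * N) :
    κ ≤ 0 ∧ 0 ≤ s₂ ∧ (α - N) * κ - s₂ + (α - N) = -(2 * N) := by
  have ht'' := (lt_div_iff₀ (by linarith : 0 < N + α)).mp ht
  have ht1 : t - 1 < 0 := by nlinarith
  refine ⟨?_, ?_, by rw [hκ, hs₂]; ring⟩
  · rw [hκ, ht', div_sub_one ht1.ne, show t - (t - 1) = 1 by ring, one_div]
    exact inv_nonpos.mpr ht1.le
  · rw [hs₂, ht', mul_div_assoc', div_add' _ _ _ ht1.ne]
    exact div_nonneg_of_nonpos (by nlinarith) ht1.le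

theorem system_integrability_and_asymptotics_general
    (n : ℕ) (hn : 2 ≤ n) (α : ℝ) (hα : (n : ℝ) < α)
    (p t t' θ κ s₁ s₂ : ℝ)
    (hp : p < 2 * ((n : ℝ) - 1) / ((n : ℝ) + α - 2))
    (ht : t < 2 * (n : ℝ) / ((n : ℝ) + α))
    (ht' : t' = t / (t - 1))
    (hθ : θ = 1 / (p - 1)) (hκ : κ = t' - 1)
    (hs₁ : s₁ = (n : ℝ) + α - 2 - ((n : ℝ) - α) / (p - 1))
    (hs₂ : s₂ = (α - (n : ℝ)) * t' + 2 * (n : ℝ))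
    (u : Eu (n - 1) → ℝ) (v : Eu n → ℝ)
    (hum : Measurable u) (hvm : Measurable v)
    (hu0 : ∀ y, 0 < u y) (hv0 : ∀ x ∈ upperHalf n, 0 < v x)
    (hu : ∀ y, ENNReal.ofReal (u y) =
      ∫⁻ x in upperHalf n,
        ENNReal.ofReal (v x ^ κ * ‖x - emb n y‖ ^ (α - (n : ℝ)) * ‖x - xo n‖ ^ (-s₂)))
    (hv : ∀ x ∈ upperHalf n, ENNReal.ofReal (v x) =
      ∫⁻ y, ENNReal.ofReal (u y ^ θ * ‖x - emb n y‖ ^ (α - (n : ℝ)) * ‖emb n y - xo n‖ ^ (-s₁)))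
    :
    ((∫⁻ y, ENNReal.ofReal
          ((1 + ‖y‖ ^ (α - (n : ℝ))) * u y ^ θ * ‖emb n y - xo n‖ ^ (-s₁))) ≠ ⊤ ∧
      (∫⁻ x in upperHalf n, ENNReal.ofReal
          ((1 + ‖x‖ ^ (α - (n : ℝ))) * v x ^ κ * ‖x - xo n‖ ^ (-s₂))) ≠ ⊤) ∧
    (0 < (∫⁻ x in upperHalf n, ENNReal.ofReal (v x ^ κ * ‖x - xo n‖ ^ (-s₂))) ∧
      (∫⁻ x in upperHalf n, ENNReal.ofReal (v x ^ κ * ‖x - xo n‖ ^ (-s₂))) ≠ ⊤ ∧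
      Filter.Tendsto (fun y : Eu (n - 1) => ‖y‖ ^ ((n : ℝ) - α) * u y)
        (Filter.cocompact (Eu (n - 1)))
        (nhds (∫⁻ x in upperHalf n, ENNReal.ofReal (v x ^ κ * ‖x - xo n‖ ^ (-s₂))).toReal)) ∧
    (0 < (∫⁻ y, ENNReal.ofReal (u y ^ θ * ‖emb n y - xo n‖ ^ (-s₁))) ∧
      (∫⁻ y, ENNReal.ofReal (u y ^ θ * ‖emb n y - xo n‖ ^ (-s₁))) ≠ ⊤ ∧
      Filter.Tendsto (fun x : Eu n => ‖x‖ ^ ((n : ℝ) - α) * v x)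
        (Filter.cocompact (Eu n) ⊓ Filter.principal (upperHalf n))
        (nhds (∫⁻ y, ENNReal.ofReal (u y ^ θ * ‖emb n y - xo n‖ ^ (-s₁))).toReal)) ∧
    (∃ C₁ : ℝ, 0 < C₁ ∧ ∀ y : Eu (n - 1),
      (1 + ‖y‖ ^ (α - (n : ℝ))) / C₁ ≤ u y ∧ u y ≤ C₁ * (1 + ‖y‖ ^ (α - (n : ℝ)))) ∧
    (∃ C₂ : ℝ, 0 < C₂ ∧ ∀ x ∈ upperHalf n,
      (1 + ‖x‖ ^ (α - (n : ℝ))) / C₂ ≤ v x ∧ v x ≤ C₂ * (1 + ‖x‖ ^ (α - (n : ℝ)))) := by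
  obtain ⟨m, rfl⟩ : ∃ m, n = m + 1 := ⟨n - 1, by omega⟩
  have hm : (1 : ℝ) ≤ m := by exact_mod_cast (by omega : 1 ≤ m)
  have hN : ((m + 1 : ℕ) : ℝ) = m + 1 := by push_cast; ring
  obtain ⟨hθ0, hs₁0, hexp₁⟩ := exponents_of_p_lt (by rw [hN]; linarith) hα hp hθ hs₁
  obtain ⟨hκ0, hs₂0, hexp₂⟩ := exponents_of_t_lt (by rw [hN]; linarith) hα ht ht' hκ hs₂
  set β := α - ((m + 1 : ℕ) : ℝ) with hβ_def
  have hβ : 0 ≤ β := by linarith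
  set U := upperHalf (m + 1)
  set f : Eu m → ℝ := fun y => u y ^ θ * ‖emb (m + 1) y - xo (m + 1)‖ ^ (-s₁)
  set g : Eu (m + 1) → ℝ := fun x => v x ^ κ * ‖x - xo (m + 1)‖ ^ (-s₂)
  have hu' : ∀ y, ENNReal.ofReal (u y) = potential (volume.restrict U) id g β (emb (m + 1) y) :=
    fun y => by rw [hu y, potential]; congr with x; simp only [g, id]; ring_nf
  have hv' : ∀ x ∈ U, ENNReal.ofReal (v x) = potential volume (emb (m + 1)) f β x :=
    fun x hx => by rw [hv x hx, potential]; congr with y; simp only [f]; rw [norm_sub_rev]; ring_nf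
  have hfm : Measurable f := by simp only [f]; fun_prop
  have hgm : Measurable g := by simp only [g]; fun_prop
  obtain ⟨cu, hcu, hu_low⟩ := exists_lower_bound_potential_upperHalf hβ hgm fun x hx =>
    rpow_mul_norm_sub_xo_rpow_pos (hv0 x hx) hx.le
  obtain ⟨cv, hcv, hv_low⟩ := exists_lower_bound_potential_emb (by omega) hβ hfm fun y =>
    rpow_mul_norm_sub_xo_rpow_pos (hu0 y) (lastCoord_emb y).ge
  have hMf : ∫⁻ y, ENNReal.ofReal (f y * (1 + ‖emb (m + 1) y‖) ^ β) ≠ ⊤ := by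
    simpa using setLIntegral_rpow_mul_norm_sub_xo_ne_top (μ := volume) MeasurableSet.univ
      (fun y _ => ⟨norm_emb y, (lastCoord_emb y).ge⟩) hcu hθ0 hs₁0
      (fun y _ => by
        rw [← ENNReal.ofReal_le_ofReal_iff (hu0 y).le, hu' y, ← norm_emb]; exact hu_low _)
      (by rw [hexp₁, finrank_euclideanSpace_fin, hN]; linarith)
  have hMg : ∫⁻ x in U, ENNReal.ofReal (g x * (1 + ‖id x‖) ^ β) ≠ ⊤ :=
    setLIntegral_rpow_mul_norm_sub_xo_ne_top measurableSet_upperHalf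
      (fun x hx => ⟨rfl, hx.le⟩) hcv hκ0 hs₂0
      (fun x hx => by rw [← ENNReal.ofReal_le_ofReal_iff (hv0 x hx).le, hv' x hx]; exact hv_low x)
      (by rw [hexp₂, finrank_euclideanSpace_fin, hN]; linarith)
  have hu'' : ∀ y, u y = (potential (volume.restrict U) id g β (emb (m + 1) y)).toReal :=
    fun y => by rw [← hu' y, ENNReal.toReal_ofReal (hu0 y).le]
  have hv'' : ∀ x ∈ U, v x = (potential volume (emb (m + 1)) f β x).toReal :=
    fun x hx => by rw [← hv' x hx, ENNReal.toReal_ofReal (hv0 x hx).le]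
  obtain ⟨Cu, hCu, hu_bd⟩ := exists_bounds_toReal_potential hβ hcu hu_low hMg
  obtain ⟨Cv, hCv, hv_bd⟩ := exists_bounds_toReal_potential hβ hcv hv_low hMf
  refine ⟨⟨?_, ?_⟩, ⟨?_, lintegral_ofReal_ne_top_of_mul_one_add_rpow hβ hMg, ?_⟩,
    ⟨?_, lintegral_ofReal_ne_top_of_mul_one_add_rpow hβ hMf, ?_⟩,
    ⟨Cu, hCu, fun y => by rw [hu'', ← norm_emb]; exact hu_bd _⟩,
    ⟨Cv, hCv, fun x hx => by rw [hv'' x hx]; exact hv_bd x⟩⟩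
  · have := lintegral_one_add_rpow_mul_ne_top hβ hMf
    simp only [f, norm_emb, ← mul_assoc] at this
    exact this
  · simpa only [g, id, mul_assoc] using lintegral_one_add_rpow_mul_ne_top hβ hMg
  · exact setLIntegral_ofReal_pos hgm (fun x hx => rpow_mul_norm_sub_xo_rpow_pos (hv0 x hx) hx.le)
      ((measure_ball_pos volume _ one_pos).trans_le
        (measure_mono (ball_single_last_subset_upperHalf (t := 1) le_rfl)))
  · have hZ : Tendsto (fun y : Eu m => ‖emb (m + 1) y‖) (cocompact (Eu m)) atTop := by
      simpa only [norm_emb] using tendsto_norm_cocompact_atTop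
    refine (tendsto_rpow_neg_mul_toReal_potential hβ measurable_id hgm hMg hZ).congr fun y => ?_
    rw [hu'', norm_emb, hβ_def, neg_sub]
  · exact (setLIntegral_ofReal_pos hfm (fun y _ => rpow_mul_norm_sub_xo_rpow_pos (hu0 y)
      (lastCoord_emb y).ge) (measure_ball_pos volume 0 one_pos)).trans_le
      (setLIntegral_le_lintegral _ _)
  · refine (tendsto_rpow_neg_mul_toReal_potential hβ (by fun_prop) hfm hMf
      (tendsto_norm_cocompact_atTop.mono_left inf_le_left)).congr'
      (eventually_inf_principal.mpr (Eventually.of_forall fun x hx => ?_))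
    dsimp only
    rw [hv'' x hx, hβ_def, neg_sub]

/-- Lemma 2.6, integrability and asymptotics of positive
solutions of the integral system on the upper half space. -/
theorem system_integrability_and_asymptotics
    (n : ℕ) (hn : 2 ≤ n) (α : ℝ) (hα : (n : ℝ) < α)
    (p t t' θ κ s₁ s₂ s₁' s₂' : ℝ)
    (hp0 : 0 < p) (hp : p < 2 * ((n : ℝ) - 1) / ((n : ℝ) + α - 2))
    (ht0 : 0 < t) (ht : t < 2 * (n : ℝ) / ((n : ℝ) + α))
    (ht' : t' = t / (t - 1))
    (hθ : θ = 1 / (p - 1)) (hκ : κ = t' - 1)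
    (hs₁ : s₁ = (n : ℝ) + α - 2 - ((n : ℝ) - α) / (p - 1))
    (hs₂ : s₂ = (α - (n : ℝ)) * t' + 2 * (n : ℝ))
    (hs₁' : s₁' = (n : ℝ) + α - 2 - 2 * ((n : ℝ) - 1) / p)
    (hs₂' : s₂' = (n : ℝ) + α - 2 * (n : ℝ) / t)
    (u : Eu (n - 1) → ℝ) (v : Eu n → ℝ)
    (hum : Measurable u) (hvm : Measurable v)
    (hu0 : ∀ y, 0 < u y) (hv0 : ∀ x ∈ upperHalf n, 0 < v x)
    (hu : ∀ y, ENNReal.ofReal (u y) =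
      ∫⁻ x in upperHalf n,
        ENNReal.ofReal (v x ^ κ * ‖x - emb n y‖ ^ (α - (n : ℝ)) * ‖x - xo n‖ ^ (-s₂)))
    (hv : ∀ x ∈ upperHalf n, ENNReal.ofReal (v x) =
      ∫⁻ y, ENNReal.ofReal (u y ^ θ * ‖x - emb n y‖ ^ (α - (n : ℝ)) * ‖emb n y - xo n‖ ^ (-s₁)))
    (huL : (∫⁻ y, ENNReal.ofReal ((u y * ‖emb n y - xo n‖ ^ (-s₁')) ^ (θ + 1))) ≠ ⊤)
    (hvL : (∫⁻ x in upperHalf n, ENNReal.ofReal ((v x * ‖x - xo n‖ ^ (-s₂')) ^ t')) ≠ ⊤)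
    :
    ((∫⁻ y, ENNReal.ofReal
          ((1 + ‖y‖ ^ (α - (n : ℝ))) * u y ^ θ * ‖emb n y - xo n‖ ^ (-s₁))) ≠ ⊤ ∧
      (∫⁻ x in upperHalf n, ENNReal.ofReal
          ((1 + ‖x‖ ^ (α - (n : ℝ))) * v x ^ κ * ‖x - xo n‖ ^ (-s₂))) ≠ ⊤) ∧
    (0 < (∫⁻ x in upperHalf n, ENNReal.ofReal (v x ^ κ * ‖x - xo n‖ ^ (-s₂))) ∧
      (∫⁻ x in upperHalf n, ENNReal.ofReal (v x ^ κ * ‖x - xo n‖ ^ (-s₂))) ≠ ⊤ ∧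
      Filter.Tendsto (fun y : Eu (n - 1) => ‖y‖ ^ ((n : ℝ) - α) * u y)
        (Filter.cocompact (Eu (n - 1)))
        (nhds (∫⁻ x in upperHalf n, ENNReal.ofReal (v x ^ κ * ‖x - xo n‖ ^ (-s₂))).toReal)) ∧
    (0 < (∫⁻ y, ENNReal.ofReal (u y ^ θ * ‖emb n y - xo n‖ ^ (-s₁))) ∧
      (∫⁻ y, ENNReal.ofReal (u y ^ θ * ‖emb n y - xo n‖ ^ (-s₁))) ≠ ⊤ ∧
      Filter.Tendsto (fun x : Eu n => ‖x‖ ^ ((n : ℝ) - α) * v x)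
        (Filter.cocompact (Eu n) ⊓ Filter.principal (upperHalf n))
        (nhds (∫⁻ y, ENNReal.ofReal (u y ^ θ * ‖emb n y - xo n‖ ^ (-s₁))).toReal)) ∧
    (∃ C₁ : ℝ, 0 < C₁ ∧ ∀ y : Eu (n - 1),
      (1 + ‖y‖ ^ (α - (n : ℝ))) / C₁ ≤ u y ∧ u y ≤ C₁ * (1 + ‖y‖ ^ (α - (n : ℝ)))) ∧
    (∃ C₂ : ℝ, 0 < C₂ ∧ ∀ x ∈ upperHalf n,
      (1 + ‖x‖ ^ (α - (n : ℝ))) / C₂ ≤ v x ∧ v x ≤ C₂ * (1 + ‖x‖ ^ (α - (n : ℝ)))) :=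
  system_integrability_and_asymptotics_general n hn α hα p t t' θ κ s₁ s₂ hp ht ht' hθ hκ hs₁ hs₂ u
    v hum hvm hu0 hv0 hu hv
end
end

section
/- Let α > n, θ < 0, κ < 0, s₁, s₂ > 0, and let (u, v) be a pair of positive solutions of the system u(y) = ∫_{ℝ^n_+} v^κ(x) |x−y|^{α−n} |x−x^o|^{−s₂} dx for y ∈ ∂ℝ^n_+ and v(x) = ∫_{∂ℝ^n_+} u^θ(y) |x−y|^{α−n} |y−x^o|^{−s₁} dy for x ∈ ℝ^n_+. Then for every λ ∈ ℝ: u(y) − u_λ(y) = ∫_{Σ_{λ,n}} ( |x_λ − y|^{α−n} − |x − y|^{α−n} ) ( v_λ^κ(x)|x_λ − x^o|^{−s₂} − v^κ(x)|x − x^o|^{−s₂} ) dx for all y ∈ ∂ℝ^n_+, and v(x) − v_λ(x) = ∫_{Σ_{λ,n−1}} ( |y_λ − x|^{α−n} − |y − x|^{α−n} ) ( u_λ^θ(y)|y_λ − x^o|^{−s₁} − u^θ(y)|y − x^o|^{−s₁} ) dy for all x ∈ ℝ^n_+. -/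
noncomputable section

open MeasureTheory Metric ENNReal

/-- Reflection `x ↦ x_λ = (2λ - x_1, x_2, …, x_m)` across the hyperplane
`{x_1 = λ}`. -/
def reflFst (m : ℕ) (l : ℝ) (x : Eu m) : Eu m :=
  (EuclideanSpace.equiv (Fin m) ℝ).symm fun i => if (i : ℕ) = 0 then 2 * l - x i else x i

/-! The reflection `x ↦ x_λ` is a measure-preserving isometric involution of `ℝ^n` and of
`ℝ^{n-1}`; it preserves `ℝ^n_+` and commutes with the embedding of the boundary. Hence `u_λ(y)`
is the integral defining `u(y)` with kernel `|x_λ - y|^{α-n}` in place of `|x - y|^{α-n}`, and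
similarly for `v_λ`. Subtracting, and folding the part over `{x_1 > λ}` onto `Σ_λ` by the
reflection, gives the identities. The hyperplane `{x_1 = λ}` consists of fixed points of the
reflection, where the folded integrand vanishes, so it needs no separate treatment. -/

open Set

section Reflection

variable {m : ℕ} {l : ℝ}

lemma reflFst_apply (x : Eu m) (i : Fin m) :
    reflFst m l x i = if (i : ℕ) = 0 then 2 * l - x i else x i := rfl

lemma reflFst_involutive : Function.Involutive (reflFst m l) := by
  intro x
  ext i
  simp only [reflFst_apply]
  split_ifs <;> ring

lemma norm_reflFst_sub_reflFst (x y : Eu m) : ‖reflFst m l x - reflFst m l y‖ = ‖x - y‖ := by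
  simp only [EuclideanSpace.norm_eq, PiLp.sub_apply, reflFst_apply]
  congr 1
  refine Finset.sum_congr rfl fun i _ => ?_
  split_ifs
  · rw [← norm_neg]; ring_nf
  · rfl

lemma norm_sub_reflFst (x y : Eu m) : ‖x - reflFst m l y‖ = ‖reflFst m l x - y‖ := by
  rw [← norm_reflFst_sub_reflFst (l := l), reflFst_involutive y]

lemma measurePreserving_reflFst : MeasurePreserving (reflFst m l) := by
  have hcoord : ∀ i : Fin m,
      MeasurePreserving (fun t : ℝ => if (i : ℕ) = 0 then 2 * l - t else t) := by
    intro i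
    split_ifs
    · exact Measure.measurePreserving_sub_left volume (2 * l)
    · exact MeasurePreserving.id volume
  have htoLp := EuclideanSpace.volume_preserving_symm_measurableEquiv_toLp (Fin m)
  exact (htoLp.symm.comp (volume_preserving_pi hcoord)).comp htoLp

lemma firstCoord_reflFst (hm : 0 < m) (x : Eu m) :
    firstCoord m (reflFst m l x) = 2 * l - firstCoord m x := by
  simp [firstCoord, hm, reflFst_apply]

lemma reflFst_eq_self_of_firstCoord_eq (hm : 0 < m) {x : Eu m} (hx : firstCoord m x = l) :
    reflFst m l x = x := by
  ext i
  rw [reflFst_apply]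
  split_ifs with hi
  · have : i = ⟨0, hm⟩ := Fin.ext hi
    subst this
    simp only [firstCoord, dif_pos hm] at hx
    linarith
  · rfl

lemma lastCoord_reflFst (hm : 2 ≤ m) (x : Eu m) :
    lastCoord m (reflFst m l x) = lastCoord m x := by
  simp only [lastCoord, dif_pos (by omega : 0 < m), reflFst_apply]
  rw [if_neg (show m - 1 ≠ 0 by omega)]

lemma reflFst_preimage_upperHalf (hm : 2 ≤ m) : reflFst m l ⁻¹' upperHalf m = upperHalf m := by
  ext x
  simp [upperHalf, lastCoord_reflFst hm]

lemma emb_apply {n : ℕ} (y : Eu (n - 1)) (i : Fin n) :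
    emb n y i = if h : (i : ℕ) < n - 1 then y ⟨i, h⟩ else 0 := rfl

lemma emb_reflFst {n : ℕ} (hn : 2 ≤ n) (y : Eu (n - 1)) :
    emb n (reflFst (n - 1) l y) = reflFst n l (emb n y) := by
  ext i
  by_cases hi : (i : ℕ) < n - 1
  · simp only [emb_apply, reflFst_apply, dif_pos hi]
  · have hi0 : (i : ℕ) ≠ 0 := by omega
    simp only [emb_apply, reflFst_apply, dif_neg hi, if_neg hi0]

@[fun_prop]
lemma continuous_firstCoord : Continuous (firstCoord m) := by
  unfold firstCoord
  split_ifs <;> fun_prop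

@[fun_prop]
lemma continuous_lastCoord : Continuous (lastCoord m) := by
  unfold lastCoord
  split_ifs <;> fun_prop

@[fun_prop]
lemma continuous_emb_s11 (n : ℕ) : Continuous (emb n) := by
  refine (EuclideanSpace.equiv (Fin n) ℝ).symm.continuous.comp (continuous_pi fun i => ?_)
  by_cases h : (i : ℕ) < n - 1
  · simp only [dif_pos h]; fun_prop
  · simp only [dif_neg h]; fun_prop

end Reflection

section Involution

variable {X : Type*} [MeasurableSpace X] {μ : Measure X} {T : X → X} {S : Set X}

lemma integral_eq_setIntegral_add_comp (hT : MeasurePreserving T μ μ)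
    (hTT : Function.Involutive T) (hS : MeasurableSet S) (hcov : ∀ x, x ∉ S → T x ∈ S)
    (hfix : ∀ x ∈ S, T x ∈ S → T x = x) {f : X → ℝ} (hf : Integrable f μ)
    (hf0 : ∀ x, T x = x → f x = 0) :
    ∫ x, f x ∂μ = ∫ x in S, (f x + f (T x)) ∂μ := by
  have hemb := (MeasurableEquiv.ofInvolutive T hTT hT.measurable).measurableEmbedding
  have hcompl : ∫ x in Sᶜ, f x ∂μ = ∫ x in S, f (T x) ∂μ := by
    rw [← hT.setIntegral_preimage_emb hemb f Sᶜ]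
    refine (setIntegral_eq_of_subset_of_forall_sdiff_eq_zero hS (fun x hx => ?_) ?_).symm
    · simpa only [hTT x] using hcov (T x) hx
    · rintro x ⟨hxS, hxT⟩
      have hx : T x = x := hfix x hxS (not_not.mp hxT)
      rw [hx, hf0 x hx]
  rw [← integral_add_compl hS hf, hcompl]
  exact (integral_add hf.integrableOn (hT.integrable_comp_of_integrable hf).integrableOn).symm

lemma integral_mul_sub_integral_comp_mul_eq_setIntegral (hT : MeasurePreserving T μ μ)
    (hTT : Function.Involutive T) (hS : MeasurableSet S) (hcov : ∀ x, x ∉ S → T x ∈ S)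
    (hfix : ∀ x ∈ S, T x ∈ S → T x = x) {K g : X → ℝ}
    (hKg : Integrable (fun x => K x * g x) μ) (hKTg : Integrable (fun x => K (T x) * g x) μ) :
    ∫ x, K x * g x ∂μ - ∫ x, K (T x) * g x ∂μ =
      ∫ x in S, (K (T x) - K x) * (g (T x) - g x) ∂μ := by
  rw [← integral_sub hKg hKTg, integral_eq_setIntegral_add_comp hT hTT hS hcov hfix
    (f := fun x => K x * g x - K (T x) * g x) (hKg.sub hKTg) (fun x hx => by simp [hx])]
  congr 1 with x
  rw [hTT x]
  ring

end Involution

lemma integrable_and_integral_eq_of_lintegral_ofReal_eq {X : Type*} [MeasurableSpace X]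
    {μ : Measure X} {f : X → ℝ} (hfm : AEStronglyMeasurable f μ) (hf0 : 0 ≤ᵐ[μ] f) {a : ℝ}
    (ha : 0 ≤ a) (h : ∫⁻ x, ENNReal.ofReal (f x) ∂μ = ENNReal.ofReal a) :
    Integrable f μ ∧ ∫ x, f x ∂μ = a :=
  ⟨⟨hfm, (hasFiniteIntegral_iff_ofReal hf0).2 (h ▸ ofReal_lt_top)⟩,
    by rw [integral_eq_lintegral_of_nonneg_ae hf0 hfm, h, ENNReal.toReal_ofReal ha]⟩

lemma sub_eq_setIntegral_reflFst {m : ℕ} (hm : 0 < m) (l : ℝ) {A : Set (Eu m)}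
    (hA : MeasurableSet A) (hTA : reflFst m l ⁻¹' A = A) {K g : Eu m → ℝ} (hK : Measurable K)
    (hg : Measurable g) (hK0 : ∀ x, 0 ≤ K x) (hg0 : ∀ x ∈ A, 0 ≤ g x) {a b : ℝ} (ha0 : 0 ≤ a)
    (hb0 : 0 ≤ b) (ha : ∫⁻ x in A, ENNReal.ofReal (K x * g x) = ENNReal.ofReal a)
    (hb : ∫⁻ x in A, ENNReal.ofReal (K (reflFst m l x) * g x) = ENNReal.ofReal b) :
    a - b = ∫ x in A ∩ {x | firstCoord m x ≤ l},
      (K (reflFst m l x) - K x) * (g (reflFst m l x) - g x) := by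
  have hT : MeasurePreserving (reflFst m l) (volume.restrict A) (volume.restrict A) := by
    simpa only [hTA] using (measurePreserving_reflFst (l := l)).restrict_preimage hA
  have hS : MeasurableSet {x | firstCoord m x ≤ l} := measurableSet_le (by fun_prop) (by fun_prop)
  have hg0' : 0 ≤ᵐ[volume.restrict A] g := (ae_restrict_iff' hA).2 (.of_forall hg0)
  obtain ⟨hia, rfl⟩ := integrable_and_integral_eq_of_lintegral_ofReal_eq
    (f := fun x => K x * g x)
    (hK.mul hg).aestronglyMeasurable (hg0'.mono fun x hx => mul_nonneg (hK0 x) hx) ha0 ha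
  obtain ⟨hib, rfl⟩ := integrable_and_integral_eq_of_lintegral_ofReal_eq
    (f := fun x => K (reflFst m l x) * g x)
    ((hK.comp hT.measurable).mul hg).aestronglyMeasurable
    (hg0'.mono fun x hx => mul_nonneg (hK0 _) hx) hb0 hb
  rw [integral_mul_sub_integral_comp_mul_eq_setIntegral hT reflFst_involutive hS ?cov ?fix
    hia hib, Measure.restrict_restrict hS, inter_comm]
  case cov =>
    intro x hx
    simp only [mem_ofPred_eq, not_le, firstCoord_reflFst hm] at hx ⊢
    linarith
  case fix =>
    intro x hx hTx
    simp only [mem_ofPred_eq, firstCoord_reflFst hm] at hx hTx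
    exact reflFst_eq_self_of_firstCoord_eq hm (by linarith)

section MovingPlane

variable {n : ℕ} {α θ κ s₁ s₂ : ℝ} {u : Eu (n - 1) → ℝ} {v : Eu n → ℝ}

lemma sub_comp_reflFst_eq_of_boundary_equation (hn : 2 ≤ n) (hvm : Measurable v)
    (hu0 : ∀ y, 0 < u y) (hv0 : ∀ x ∈ upperHalf n, 0 < v x)
    (hu : ∀ y, ENNReal.ofReal (u y) =
      ∫⁻ x in upperHalf n,
        ENNReal.ofReal (v x ^ κ * ‖x - emb n y‖ ^ (α - (n : ℝ)) * ‖x - xo n‖ ^ (-s₂)))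
    (l : ℝ) (y : Eu (n - 1)) :
    u y - u (reflFst (n - 1) l y) =
      ∫ x in {x | x ∈ upperHalf n ∧ firstCoord n x ≤ l},
        (‖reflFst n l x - emb n y‖ ^ (α - (n : ℝ)) - ‖x - emb n y‖ ^ (α - (n : ℝ))) *
          (v (reflFst n l x) ^ κ * ‖reflFst n l x - xo n‖ ^ (-s₂) -
            v x ^ κ * ‖x - xo n‖ ^ (-s₂)) := by
  refine sub_eq_setIntegral_reflFst (by omega) l
    (K := fun x => ‖x - emb n y‖ ^ (α - (n : ℝ))) (g := fun x => v x ^ κ * ‖x - xo n‖ ^ (-s₂))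
    (measurableSet_lt (by fun_prop) (by fun_prop)) (reflFst_preimage_upperHalf hn)
    (by fun_prop) (by fun_prop)
    (fun x => by positivity) (fun x hx => by have := hv0 x hx; positivity)
    (hu0 _).le (hu0 _).le ?_ ?_
  · rw [hu y]
    exact lintegral_congr fun x => congrArg ENNReal.ofReal (by ring)
  · rw [hu, emb_reflFst hn]
    exact lintegral_congr fun x => congrArg ENNReal.ofReal (by rw [norm_sub_reflFst]; ring)

lemma sub_comp_reflFst_eq_of_interior_equation (hn : 2 ≤ n) (hum : Measurable u)
    (hu0 : ∀ y, 0 < u y) (hv0 : ∀ x ∈ upperHalf n, 0 < v x)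
    (hv : ∀ x ∈ upperHalf n, ENNReal.ofReal (v x) =
      ∫⁻ y, ENNReal.ofReal (u y ^ θ * ‖x - emb n y‖ ^ (α - (n : ℝ)) *
        ‖emb n y - xo n‖ ^ (-s₁)))
    (l : ℝ) {x : Eu n} (hx : x ∈ upperHalf n) :
    v x - v (reflFst n l x) =
      ∫ y in {y : Eu (n - 1) | firstCoord (n - 1) y ≤ l},
        (‖emb n (reflFst (n - 1) l y) - x‖ ^ (α - (n : ℝ)) -
            ‖emb n y - x‖ ^ (α - (n : ℝ))) *
          (u (reflFst (n - 1) l y) ^ θ * ‖emb n (reflFst (n - 1) l y) - xo n‖ ^ (-s₁) -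
            u y ^ θ * ‖emb n y - xo n‖ ^ (-s₁)) := by
  have hTx : reflFst n l x ∈ upperHalf n := by rwa [← reflFst_preimage_upperHalf hn] at hx
  rw [← univ_inter {y : Eu (n - 1) | firstCoord (n - 1) y ≤ l}]
  refine sub_eq_setIntegral_reflFst (by omega) l
    (K := fun y => ‖emb n y - x‖ ^ (α - (n : ℝ))) (g := fun y => u y ^ θ * ‖emb n y - xo n‖ ^ (-s₁))
    MeasurableSet.univ preimage_univ
    (by fun_prop) (by fun_prop) (fun y => by positivity)
    (fun y _ => by have := hu0 y; positivity) (hv0 x hx).le (hv0 _ hTx).le ?_ ?_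
  · rw [Measure.restrict_univ, hv x hx]
    exact lintegral_congr fun y => congrArg ENNReal.ofReal (by rw [norm_sub_rev]; ring)
  · rw [Measure.restrict_univ, hv _ hTx]
    refine lintegral_congr fun y => congrArg ENNReal.ofReal ?_
    rw [emb_reflFst hn, norm_sub_rev, norm_sub_reflFst, norm_sub_rev]
    ring

end MovingPlane

theorem system_moving_plane_identities_general
    (n : ℕ) (hn : 2 ≤ n) (α : ℝ)
    (θ κ s₁ s₂ : ℝ)
    (u : Eu (n - 1) → ℝ) (v : Eu n → ℝ)
    (hum : Measurable u) (hvm : Measurable v)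
    (hu0 : ∀ y, 0 < u y) (hv0 : ∀ x ∈ upperHalf n, 0 < v x)
    (hu : ∀ y, ENNReal.ofReal (u y) =
      ∫⁻ x in upperHalf n,
        ENNReal.ofReal (v x ^ κ * ‖x - emb n y‖ ^ (α - (n : ℝ)) * ‖x - xo n‖ ^ (-s₂)))
    (hv : ∀ x ∈ upperHalf n, ENNReal.ofReal (v x) =
      ∫⁻ y, ENNReal.ofReal (u y ^ θ * ‖x - emb n y‖ ^ (α - (n : ℝ)) *
        ‖emb n y - xo n‖ ^ (-s₁))) :
    ∀ l : ℝ,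
      (∀ y : Eu (n - 1),
        u y - u (reflFst (n - 1) l y) =
          ∫ x in {x | x ∈ upperHalf n ∧ firstCoord n x ≤ l},
            (‖reflFst n l x - emb n y‖ ^ (α - (n : ℝ)) -
                ‖x - emb n y‖ ^ (α - (n : ℝ))) *
              (v (reflFst n l x) ^ κ * ‖reflFst n l x - xo n‖ ^ (-s₂) -
                v x ^ κ * ‖x - xo n‖ ^ (-s₂))) ∧
      (∀ x ∈ upperHalf n,
        v x - v (reflFst n l x) =
          ∫ y in {y : Eu (n - 1) | firstCoord (n - 1) y ≤ l},
            (‖emb n (reflFst (n - 1) l y) - x‖ ^ (α - (n : ℝ)) -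
                ‖emb n y - x‖ ^ (α - (n : ℝ))) *
              (u (reflFst (n - 1) l y) ^ θ * ‖emb n (reflFst (n - 1) l y) - xo n‖ ^ (-s₁) -
                u y ^ θ * ‖emb n y - xo n‖ ^ (-s₁))) := fun l =>
  ⟨sub_comp_reflFst_eq_of_boundary_equation hn hvm hu0 hv0 hu l,
    fun _ hx => sub_comp_reflFst_eq_of_interior_equation hn hum hu0 hv0 hv l hx⟩

/-- Lemma 2.10, the moving plane identities for positive
solutions of the integral system on the upper half space. -/
theorem system_moving_plane_identities
    (n : ℕ) (hn : 2 ≤ n) (α : ℝ) (hα : (n : ℝ) < α)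
    (θ κ s₁ s₂ : ℝ) (hθ : θ < 0) (hκ : κ < 0) (hs₁ : 0 < s₁) (hs₂ : 0 < s₂)
    (u : Eu (n - 1) → ℝ) (v : Eu n → ℝ)
    (hum : Measurable u) (hvm : Measurable v)
    (hu0 : ∀ y, 0 < u y) (hv0 : ∀ x ∈ upperHalf n, 0 < v x)
    (hu : ∀ y, ENNReal.ofReal (u y) =
      ∫⁻ x in upperHalf n,
        ENNReal.ofReal (v x ^ κ * ‖x - emb n y‖ ^ (α - (n : ℝ)) * ‖x - xo n‖ ^ (-s₂)))
    (hv : ∀ x ∈ upperHalf n, ENNReal.ofReal (v x) =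
      ∫⁻ y, ENNReal.ofReal (u y ^ θ * ‖x - emb n y‖ ^ (α - (n : ℝ)) *
        ‖emb n y - xo n‖ ^ (-s₁))) :
    ∀ l : ℝ,
      (∀ y : Eu (n - 1),
        u y - u (reflFst (n - 1) l y) =
          ∫ x in {x | x ∈ upperHalf n ∧ firstCoord n x ≤ l},
            (‖reflFst n l x - emb n y‖ ^ (α - (n : ℝ)) -
                ‖x - emb n y‖ ^ (α - (n : ℝ))) *
              (v (reflFst n l x) ^ κ * ‖reflFst n l x - xo n‖ ^ (-s₂) -
                v x ^ κ * ‖x - xo n‖ ^ (-s₂))) ∧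
      (∀ x ∈ upperHalf n,
        v x - v (reflFst n l x) =
          ∫ y in {y : Eu (n - 1) | firstCoord (n - 1) y ≤ l},
            (‖emb n (reflFst (n - 1) l y) - x‖ ^ (α - (n : ℝ)) -
                ‖emb n y - x‖ ^ (α - (n : ℝ))) *
              (u (reflFst (n - 1) l y) ^ θ * ‖emb n (reflFst (n - 1) l y) - xo n‖ ^ (-s₁) -
                u y ^ θ * ‖emb n y - xo n‖ ^ (-s₁))) :=
  system_moving_plane_identities_general n hn α θ κ s₁ s₂ u v hum hvm hu0 hv0 hu hv
end
end
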